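/- arXiv:1608.08017 — 3 statements merged into one kernel-verified Lean document; each statement's English description precedes it below -/
import Mathlib

section
/- For real parameters ρ > 0, μ > 0, γ ∈ ℝ, ω ∈ ℝ and u > 0 with |ω| u^ρ < 1, the Sumudu transform of the Prabhakar kernel e_{ρ,μ,ω}^γ(t) = t^{μ-1} E_{ρ,μ}^γ(ω t^ρ) is S[e_{ρ,μ,ω}^γ](u) = u^{μ-1} (1 - ω u^ρ)^{-γ}. -/
open MeasureTheory Real Filter Topology

/-- Three-parameter Mittag-Leffler function
`E_{ρ,μ}^γ(z) = ∑ (γ)_k / Γ(ρk + μ) · z^k / k!`. -/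
noncomputable def mittagLeffler (ρ μ γ z : ℝ) : ℝ :=
  ∑' k : ℕ, (ascPochhammer ℝ k).eval γ / Real.Gamma (ρ * (k : ℝ) + μ) * z ^ k /
    (Nat.factorial k : ℝ)

/-- Sumudu transform `S[f](u) = ∫₀^∞ (1/u) e^{-t/u} f(t) dt`. -/
noncomputable def sumudu (f : ℝ → ℝ) (u : ℝ) : ℝ :=
  ∫ t in Set.Ioi (0 : ℝ), (1 / u) * Real.exp (-t / u) * f t

/-- Prabhakar kernel `e_{ρ,μ,ω}^γ(t) = t^{μ-1} E_{ρ,μ}^γ(ω t^ρ)`. -/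
noncomputable def prabhakarKernel (ρ μ ω γ : ℝ) (t : ℝ) : ℝ :=
  t ^ (μ - 1) * mittagLeffler ρ μ γ (ω * t ^ ρ)

/-- Prabhakar fractional integral, with the convention `E_{ρ,0,ω,0+}^0 f = f`. -/
noncomputable def prabhakarIntegral (ρ μ ω γ : ℝ) (f : ℝ → ℝ) (t : ℝ) : ℝ :=
  if μ = 0 ∧ γ = 0 then f t
  else ∫ y in (0 : ℝ)..t, prabhakarKernel ρ μ ω γ (t - y) * f y

/-- Hilfer–Prabhakar fractional derivative of order `μ` and type `ν`. -/
noncomputable def hilferPrabhakar (ρ ω γ μ ν : ℝ) (f : ℝ → ℝ) (t : ℝ) : ℝ :=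
  prabhakarIntegral ρ (ν * (1 - μ)) ω (-(γ * ν))
    (deriv (prabhakarIntegral ρ ((1 - ν) * (1 - μ)) ω (-(γ * (1 - ν))) f)) t

/-- Regularized Hilfer–Prabhakar fractional derivative of order `μ`. -/
noncomputable def regHilferPrabhakar (ρ ω γ μ : ℝ) (f : ℝ → ℝ) (t : ℝ) : ℝ :=
  prabhakarIntegral ρ (1 - μ) ω (-γ) (deriv f) t

section SumuduAux

open Set

private lemma poch_succ (γ : ℝ) (k : ℕ) :
    (ascPochhammer ℝ (k+1)).eval γ = (ascPochhammer ℝ k).eval γ * (γ + k) := by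
  simp [ascPochhammer_succ_right]

private lemma poch_pos {c : ℝ} (hc : 0 < c) (k : ℕ) : 0 < (ascPochhammer ℝ k).eval c := by
  induction k with
  | zero => simp
  | succ n ih => rw [poch_succ]; exact mul_pos ih (by positivity)

private lemma poch_abs_le (γ : ℝ) (k : ℕ) :
    |(ascPochhammer ℝ k).eval γ| ≤ (ascPochhammer ℝ k).eval (|γ| + 1) := by
  induction k with
  | zero => simp
  | succ n ih =>
    rw [poch_succ, poch_succ, abs_mul]
    have h1 : |γ + (n:ℝ)| ≤ |γ| + 1 + n := by
      calc |γ + (n:ℝ)| ≤ |γ| + n := by simpa using abs_add_le γ (n:ℝ)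
      _ ≤ |γ| + 1 + n := by linarith
    exact mul_le_mul ih h1 (abs_nonneg _) (poch_pos (by positivity) n).le

/-- general ratio-test summability -/
private lemma summable_aux {r : ℝ} (hr0 : 0 < r) (hr1 : r < 1) {d : ℕ → ℝ}
    (hd : ∀ k, 0 < d k) (hdr : Tendsto (fun k => d (k+1) / d k) atTop (𝓝 1)) :
    Summable (fun k => d k * r ^ k) := by
  apply summable_of_ratio_test_tendsto_lt_one hr1
  · exact Eventually.of_forall fun k => (mul_pos (hd k) (pow_pos hr0 k)).ne'
  · have : (fun k => ‖d (k+1) * r ^ (k+1)‖ / ‖d k * r ^ k‖)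
        = fun k => (d (k+1) / d k) * r := by
      funext k
      have hk : (r:ℝ)^k ≠ 0 := (pow_pos hr0 k).ne'
      rw [norm_of_nonneg (mul_pos (hd _) (pow_pos hr0 _)).le,
        norm_of_nonneg (mul_pos (hd _) (pow_pos hr0 _)).le, pow_succ,
        show d (k+1) * (r^k*r) = (d (k+1) * r) * r^k by ring,
        mul_div_mul_right _ _ hk]
      ring
    rw [this]
    simpa using hdr.mul_const r

private lemma tendsto_ratio (a : ℝ) :
    Tendsto (fun k : ℕ => 1 + a / ((k:ℝ)+1)) atTop (𝓝 1) := by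
  have h : Tendsto (fun k : ℕ => a / ((k:ℝ)+1)) atTop (𝓝 0) := by
    have := (tendsto_const_div_atTop_nhds_zero_nat a).comp (tendsto_add_atTop_nat 1)
    simpa [Function.comp_def] using this
  simpa using (tendsto_const_nhds (x := (1:ℝ)) (f := atTop)).add h

private lemma summable_S1 {c r : ℝ} (hc : 0 < c) (hr0 : 0 < r) (hr1 : r < 1) :
    Summable (fun k => (ascPochhammer ℝ k).eval c / (Nat.factorial k : ℝ) * r ^ k) := by
  apply summable_aux hr0 hr1
    (fun k => div_pos (poch_pos hc k) (by positivity))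
  have he : (fun k : ℕ => ((ascPochhammer ℝ (k+1)).eval c / (Nat.factorial (k+1) : ℝ))
      / ((ascPochhammer ℝ k).eval c / (Nat.factorial k : ℝ)))
      = fun k : ℕ => 1 + (c - 1) / ((k:ℝ)+1) := by
    funext k
    have h1 : (ascPochhammer ℝ k).eval c ≠ 0 := (poch_pos hc k).ne'
    have h2 : (Nat.factorial k : ℝ) ≠ 0 := by positivity
    rw [poch_succ, Nat.factorial_succ]
    push_cast
    field_simp
    ring
  rw [he]; exact tendsto_ratio _

private lemma summable_S2 {c r : ℝ} (hc : 0 < c) (hr0 : 0 < r) (hr1 : r < 1) :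
    Summable (fun k : ℕ => ((k:ℝ)+1) * (ascPochhammer ℝ k).eval c
      / ((Nat.factorial k : ℝ) * r) * r ^ k) := by
  apply summable_aux hr0 hr1
    (fun k => div_pos (mul_pos (by positivity) (poch_pos hc k)) (by positivity))
  have key := (tendsto_ratio 1).mul (tendsto_ratio (c-1))
  rw [show (1:ℝ)*1 = 1 by norm_num] at key
  refine key.congr fun k => ?_
  have h1 : (ascPochhammer ℝ k).eval c ≠ 0 := (poch_pos hc k).ne'
  have h2 : (Nat.factorial k : ℝ) ≠ 0 := by positivity
  have h3 : ((k:ℝ)+1) ≠ 0 := by positivity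
  rw [poch_succ, Nat.factorial_succ]
  push_cast
  field_simp
  ring

private lemma hasSum_binomial (γ : ℝ) {x : ℝ} (hx : |x| < 1) :
    HasSum (fun k : ℕ => (ascPochhammer ℝ k).eval γ / (Nat.factorial k : ℝ) * x ^ k)
      ((1 - x) ^ (-γ)) := by
  set a : ℕ → ℝ := fun k => (ascPochhammer ℝ k).eval γ / (Nat.factorial k : ℝ) with hadef
  set c : ℝ := |γ| + 1 with hcdef
  have hc : 0 < c := by positivity
  set r : ℝ := (|x| + 1) / 2 with hrdef
  have hxr : |x| < r := by rw [hrdef]; linarith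
  have hr0 : 0 < r := by positivity
  have hr1 : r < 1 := by rw [hrdef]; linarith
  have ha : ∀ k, |a k| ≤ (ascPochhammer ℝ k).eval c / (Nat.factorial k : ℝ) := by
    intro k
    rw [hadef, abs_div, abs_of_nonneg (by positivity : (0:ℝ) ≤ (Nat.factorial k : ℝ))]
    exact div_le_div_of_nonneg_right (poch_abs_le γ k) (by positivity) |>.trans_eq rfl
  have hsum : ∀ y : ℝ, |y| < r → Summable (fun k => a k * y ^ k) := by
    intro y hy
    refine Summable.of_norm_bounded (summable_S1 hc hr0 hr1) fun k => ?_
    rw [norm_mul, norm_pow]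
    exact mul_le_mul (ha k) (pow_le_pow_left₀ (norm_nonneg y) hy.le k)
      (by positivity) (div_nonneg (poch_pos hc k).le (by positivity))
  -- derivative bound
  have hbound : ∀ (k : ℕ) (y : ℝ), y ∈ Ioo (-r) r →
      ‖a k * ((k:ℝ) * y ^ (k - 1))‖ ≤
        ((k:ℝ)+1) * (ascPochhammer ℝ k).eval c / ((Nat.factorial k : ℝ) * r) * r ^ k := by
    intro k y hy
    have hyr : |y| < r := abs_lt.mpr ⟨hy.1, hy.2⟩
    cases k with
    | zero =>
      simp only [Nat.cast_zero, zero_mul, mul_zero, norm_zero]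
      exact mul_nonneg (div_nonneg (mul_nonneg (by positivity) (poch_pos hc _).le)
        (by positivity)) (by positivity)
    | succ n =>
      have h1 : ‖a (n+1) * ((↑(n+1):ℝ) * y ^ (n+1-1))‖
          = |a (n+1)| * ((↑(n+1):ℝ) * |y| ^ n) := by
        rw [show n+1-1 = n from rfl, norm_mul, norm_mul, norm_pow,
          Real.norm_eq_abs, Real.norm_eq_abs, Real.norm_eq_abs, Nat.abs_cast]
      rw [h1]
      have h2 : ((↑(n+1):ℝ)+1) * (ascPochhammer ℝ (n+1)).eval c
          / ((Nat.factorial (n+1) : ℝ) * r) * r ^ (n+1)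
          = ((ascPochhammer ℝ (n+1)).eval c / (Nat.factorial (n+1) : ℝ))
            * (((↑(n+1):ℝ)+1) * r ^ n) := by
        have : (r:ℝ) ^ (n+1) = r ^ n * r := pow_succ r n
        field_simp
        ring
      rw [h2]
      have h3 : |y| ^ n ≤ r ^ n := pow_le_pow_left₀ (abs_nonneg y) hyr.le n
      have h4 : |a (n+1)| * ((↑(n+1):ℝ) * |y| ^ n)
          ≤ ((ascPochhammer ℝ (n+1)).eval c / (Nat.factorial (n+1) : ℝ))
            * ((↑(n+1):ℝ) * r ^ n) := by
        apply mul_le_mul (ha (n+1))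
        · exact mul_le_mul_of_nonneg_left h3 (by positivity)
        · positivity
        · exact div_nonneg (poch_pos hc _).le (by positivity)
      refine h4.trans ?_
      apply mul_le_mul_of_nonneg_left _ (div_nonneg (poch_pos hc _).le (by positivity))
      have : (0:ℝ) ≤ r ^ n := by positivity
      nlinarith
  have h0mem : (0:ℝ) ∈ Ioo (-r) r := ⟨by linarith, hr0⟩
  -- derivative of the sum
  have hg : ∀ y ∈ Ioo (-r) r, HasDerivAt (fun z => ∑' k, a k * z ^ k)
      (∑' k, a k * ((k:ℝ) * y ^ (k - 1))) y := by
    intro y hy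
    exact hasDerivAt_tsum_of_isPreconnected (summable_S2 hc hr0 hr1) isOpen_Ioo
      (convex_Ioo _ _).isPreconnected
      (fun k z _ => (hasDerivAt_pow k z).const_mul (a k))
      hbound h0mem (hsum 0 (by simpa using hr0)) hy
  set g : ℝ → ℝ := fun y => ∑' k, a k * y ^ k with hgdef
  set D : ℝ → ℝ := fun y => ∑' k, a k * ((k:ℝ) * y ^ (k - 1)) with hDdef
  -- key ODE identity
  have hkey : ∀ y : ℝ, y ∈ Ioo (-r) r → (1 - y) * D y = γ * g y := by
    intro y hy
    have hyr : |y| < r := abs_lt.mpr ⟨hy.1, hy.2⟩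
    have hDy : D y = ∑' k, a k * ((k:ℝ) * y ^ (k - 1)) := rfl
    have hgy : g y = ∑' k, a k * y ^ k := rfl
    have SD : Summable (fun k => a k * ((k:ℝ) * y ^ (k - 1))) :=
      Summable.of_norm_bounded (summable_S2 hc hr0 hr1) (fun k => hbound k y hy)
    have hyD : y * D y = ∑' k, a k * ((k:ℝ) * y ^ k) := by
      rw [hDy, ← tsum_mul_left]
      congr 1; funext k
      cases k with
      | zero => simp
      | succ n =>
        simp only [Nat.succ_sub_one]
        rw [pow_succ]; ring
    have hshift : D y = ∑' k, a (k+1) * ((↑(k+1):ℝ) * y ^ k) := by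
      rw [hDy, SD.tsum_eq_zero_add]
      simp [Nat.succ_sub_one]
    have Sshift : Summable (fun k => a (k+1) * ((↑(k+1):ℝ) * y ^ k)) := by
      refine ((summable_nat_add_iff 1).mpr SD).congr fun k => ?_
      simp [Nat.succ_sub_one]
    have Smul : Summable (fun k => a k * ((k:ℝ) * y ^ k)) := by
      refine (SD.mul_left y).congr fun k => ?_
      cases k with
      | zero => simp
      | succ n =>
        simp only [Nat.succ_sub_one]
        rw [pow_succ]; ring
    have hsub : (1 - y) * D y
        = ∑' k, (a (k+1) * ((↑(k+1):ℝ) * y ^ k) - a k * ((k:ℝ) * y ^ k)) := by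
      rw [sub_mul, one_mul, hyD, hshift, Sshift.tsum_sub Smul]
    rw [hsub]
    have hterm : ∀ k : ℕ, a (k+1) * ((↑(k+1):ℝ) * y ^ k) - a k * ((k:ℝ) * y ^ k)
        = γ * (a k * y ^ k) := by
      intro k
      have hf : (Nat.factorial k : ℝ) ≠ 0 := by positivity
      have hf1 : (Nat.factorial (k+1) : ℝ) ≠ 0 := by positivity
      rw [hadef]
      simp only [poch_succ, Nat.factorial_succ]
      push_cast
      field_simp
      ring
    rw [tsum_congr hterm, tsum_mul_left, ← hgy]
  -- the auxiliary function is constant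
  set φ : ℝ → ℝ := fun y => g y * (1 - y) ^ γ with hφdef
  have hφ : ∀ y ∈ Ioo (-r) r, HasDerivAt φ 0 y := by
    intro y hy
    have h1y : (0:ℝ) < 1 - y := by
      have : y < 1 := lt_of_lt_of_le hy.2 hr1.le
      linarith
    have pd : HasDerivAt (fun z : ℝ => (1 - z) ^ γ) (γ * (1-y)^(γ-1) * (-1)) y := by
      have hc1 : HasDerivAt (fun z : ℝ => 1 - z) (-1) y := (hasDerivAt_id y).const_sub 1
      have := (Real.hasDerivAt_rpow_const (x := 1 - y) (p := γ) (Or.inl h1y.ne')).comp y hc1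
      simpa [Function.comp_def] using this
    have gd : HasDerivAt g (D y) y := hg y hy
    have prod := gd.mul pd
    have hval : D y * (1 - y) ^ γ + g y * (γ * (1-y)^(γ-1) * (-1)) = 0 := by
      have hsplit : (1-y) ^ γ = (1-y) ^ (γ-1) * (1-y) := by
        rw [← Real.rpow_add_one h1y.ne' (γ-1), sub_add_cancel]
      rw [hsplit]
      have : D y * ((1-y)^(γ-1) * (1-y)) + g y * (γ * (1-y)^(γ-1) * (-1))
          = (1-y)^(γ-1) * ((1 - y) * D y - γ * g y) := by ring
      rw [this, hkey y hy, sub_self, mul_zero]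
    rw [← hval]
    exact prod
  have hconst : ∀ z ∈ Ioo (-r) r, φ z = φ 0 := by
    intro z hz
    rcases le_or_gt 0 z with h0 | h0
    · have hsubs : Icc (0:ℝ) z ⊆ Ioo (-r) r := fun w hw =>
        ⟨by linarith [hw.1], lt_of_le_of_lt hw.2 hz.2⟩
      exact constant_of_has_deriv_right_zero
        (fun w hw => ((hφ w (hsubs hw)).continuousAt).continuousWithinAt)
        (fun w hw => (hφ w (hsubs (Ico_subset_Icc_self hw))).hasDerivWithinAt)
        z ⟨h0, le_refl z⟩
    · have hsubs : Icc z (0:ℝ) ⊆ Ioo (-r) r := fun w hw =>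
        ⟨lt_of_lt_of_le hz.1 hw.1, lt_of_le_of_lt hw.2 hr0⟩
      exact (constant_of_has_deriv_right_zero
        (fun w hw => ((hφ w (hsubs hw)).continuousAt).continuousWithinAt)
        (fun w hw => (hφ w (hsubs (Ico_subset_Icc_self hw))).hasDerivWithinAt)
        0 ⟨h0.le, le_refl 0⟩).symm
  have hg0 : g 0 = 1 := by
    have hgy0 : g 0 = ∑' k, a k * (0:ℝ) ^ k := rfl
    rw [hgy0, tsum_eq_single 0 (fun k hk => by simp [zero_pow hk])]
    simp [hadef]
  have hφ0 : φ 0 = 1 := by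
    have : φ 0 = g 0 * ((1:ℝ) - 0) ^ γ := rfl
    rw [this, hg0]; simp
  have hxmem : x ∈ Ioo (-r) r := ⟨(abs_lt.mp hxr).1, (abs_lt.mp hxr).2⟩
  have h1x : (0:ℝ) < 1 - x := by
    have : x < 1 := lt_of_le_of_lt (le_abs_self x) hx
    linarith
  have hgx : g x * (1 - x) ^ γ = 1 := by
    have := hconst x hxmem
    rw [hφ0] at this
    exact this
  have hrpow : (0:ℝ) < (1 - x) ^ γ := Real.rpow_pos_of_pos h1x γ
  have hgval : g x = (1 - x) ^ (-γ) := by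
    rw [Real.rpow_neg h1x.le]
    exact eq_inv_of_mul_eq_one_left hgx
  have h := (hsum x hxr).hasSum
  rw [show (∑' k, a k * x ^ k) = (1 - x) ^ (-γ) from hgval] at h
  exact h

end SumuduAux

/-- Sumudu transform of the Prabhakar kernel. -/
theorem sumudu_prabhakarKernel (ρ μ γ ω u : ℝ) (hρ : 0 < ρ) (hμ : 0 < μ)
    (hu : 0 < u) (hω : |ω| * u ^ ρ < 1) :
    sumudu (prabhakarKernel ρ μ ω γ) u = u ^ (μ - 1) * (1 - ω * u ^ ρ) ^ (-γ) := by
  have hupow : (0:ℝ) < u ^ ρ := rpow_pos_of_pos hu ρ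
  set x : ℝ := ω * u ^ ρ with hxdef
  have hx : |x| < 1 := by rw [hxdef, abs_mul, abs_of_pos hupow]; exact hω
  set c0 : ℝ := |γ| + 1 with hc0def
  have hc0 : 0 < c0 := by positivity
  set r : ℝ := (|x| + 1) / 2 with hrdef
  have hxr : |x| ≤ r := by rw [hrdef]; linarith
  have hr0 : 0 < r := by positivity
  have hr1 : r < 1 := by rw [hrdef]; linarith
  set C : ℕ → ℝ := fun k => 1/u *
      ((ascPochhammer ℝ k).eval γ / Real.Gamma (ρ * (k:ℝ) + μ) * ω ^ k
        / (Nat.factorial k : ℝ)) with hC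
  set F : ℕ → ℝ → ℝ := fun k t => (1/u * Real.exp (-t/u) * t ^ (μ-1)) *
      ((ascPochhammer ℝ k).eval γ / Real.Gamma (ρ * (k:ℝ) + μ) * (ω * t ^ ρ) ^ k
        / (Nat.factorial k : ℝ)) with hF
  have hs : ∀ k : ℕ, 0 < ρ * (k:ℝ) + μ := by
    intro k
    have : (0:ℝ) ≤ ρ * k := mul_nonneg hρ.le (Nat.cast_nonneg k)
    linarith
  -- Step 1: rewrite the Sumudu integrand as a series
  have step1 : sumudu (prabhakarKernel ρ μ ω γ) u
      = ∫ t in Set.Ioi (0:ℝ), ∑' k, F k t := by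
    unfold sumudu prabhakarKernel mittagLeffler
    congr 1
    funext t
    rw [← mul_assoc, ← tsum_mul_left]
  -- pointwise form of F on Ioi 0
  have hFeq : ∀ k : ℕ, ∀ t ∈ Set.Ioi (0:ℝ),
      F k t = C k * (t ^ (ρ * (k:ℝ) + μ - 1) * Real.exp (-(u⁻¹ * t))) := by
    intro k t ht
    have ht' : (0:ℝ) < t := ht
    have h1 : (t ^ ρ) ^ k = t ^ (ρ * (k:ℝ)) := by
      rw [← Real.rpow_natCast (t ^ ρ) k, ← Real.rpow_mul ht'.le]
    have h2 : t ^ (μ-1) * t ^ (ρ * (k:ℝ)) = t ^ (ρ * (k:ℝ) + μ - 1) := by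
      rw [← Real.rpow_add ht']; ring_nf
    have h3 : Real.exp (-t/u) = Real.exp (-(u⁻¹ * t)) := by
      rw [neg_div, div_eq_inv_mul]
    calc F k t = (1/u * ((ascPochhammer ℝ k).eval γ / Real.Gamma (ρ * (k:ℝ) + μ) * ω ^ k
          / (Nat.factorial k : ℝ)))
        * ((t ^ (μ-1) * (t ^ ρ) ^ k) * Real.exp (-t/u)) := by
          simp only [hF, mul_pow]; ring
      _ = C k * (t ^ (ρ * (k:ℝ) + μ - 1) * Real.exp (-(u⁻¹ * t))) := by
          rw [h1, h2, h3]
  -- integrability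
  have hint : ∀ k : ℕ, IntegrableOn (F k) (Set.Ioi (0:ℝ)) := by
    intro k
    have hbase : IntegrableOn (fun t : ℝ => t ^ (ρ * (k:ℝ) + μ - 1)
        * Real.exp (-(u⁻¹ * t))) (Set.Ioi (0:ℝ)) := by
      have := integrableOn_rpow_mul_exp_neg_mul_rpow (p := 1) (s := ρ * (k:ℝ) + μ - 1)
        (b := u⁻¹) (by linarith [hs k]) one_pos (by positivity)
      simpa [Real.rpow_one] using this
    exact IntegrableOn.congr_fun (hbase.const_mul (C k))
      (fun t ht => (hFeq k t ht).symm) measurableSet_Ioi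
  -- norm integrals
  have hnorm : ∀ k : ℕ, (∫ t in Set.Ioi (0:ℝ), ‖F k t‖)
      = |C k| * (u ^ (ρ * (k:ℝ) + μ) * Real.Gamma (ρ * (k:ℝ) + μ)) := by
    intro k
    rw [setIntegral_congr_fun measurableSet_Ioi
      (g := fun t => |C k| * (t ^ (ρ * (k:ℝ) + μ - 1) * Real.exp (-(u⁻¹ * t))))
      (fun t ht => by
        rw [Real.norm_eq_abs, hFeq k t ht, abs_mul]
        congr 1
        exact abs_of_nonneg (mul_nonneg (Real.rpow_nonneg (le_of_lt ht) _) (Real.exp_pos _).le))]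
    rw [integral_const_mul, integral_rpow_mul_exp_neg_mul_Ioi (hs k) (by positivity),
      one_div, inv_inv]
  have hGpos : ∀ k : ℕ, 0 < Real.Gamma (ρ * (k:ℝ) + μ) := fun k => Real.Gamma_pos_of_pos (hs k)
  have hupowsplit : ∀ k : ℕ, u ^ (ρ * (k:ℝ) + μ) = (u ^ ρ) ^ k * u ^ μ := by
    intro k
    rw [Real.rpow_add hu, ← Real.rpow_natCast (u ^ ρ) k, ← Real.rpow_mul hu.le]
  have humu : u ^ (μ - 1) = u ^ μ / u := by
    rw [Real.rpow_sub hu, Real.rpow_one]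
  have hC_eq : ∀ k : ℕ, |C k| * (u ^ (ρ * (k:ℝ) + μ) * Real.Gamma (ρ * (k:ℝ) + μ))
      = u ^ (μ-1) * (|(ascPochhammer ℝ k).eval γ| / (Nat.factorial k : ℝ) * |x| ^ k) := by
    intro k
    have hΓ := hGpos k
    have hfk : (0:ℝ) < (Nat.factorial k : ℝ) := by positivity
    simp only [hC, hxdef, abs_mul, abs_div, abs_pow, abs_of_pos hΓ, abs_of_pos hfk,
      abs_of_pos hu, abs_of_pos hupow, abs_one, mul_pow]
    rw [hupowsplit k, humu]
    field_simp
  -- summability of norm integrals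
  have hsumnorm : Summable (fun k => ∫ t in Set.Ioi (0:ℝ), ‖F k t‖) := by
    refine Summable.of_nonneg_of_le
      (fun k => integral_nonneg fun t => norm_nonneg _) (fun k => ?_)
      ((summable_S1 hc0 hr0 hr1).mul_left (u ^ (μ-1)))
    rw [hnorm k, hC_eq k]
    refine mul_le_mul_of_nonneg_left ?_ (le_of_lt (rpow_pos_of_pos hu _))
    refine mul_le_mul ?_ (pow_le_pow_left₀ (abs_nonneg x) hxr k) (by positivity)
      (div_nonneg (poch_pos hc0 k).le (by positivity))
    exact div_le_div_of_nonneg_right (poch_abs_le γ k) (by positivity)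
  -- interchange
  have hinter : (∫ t in Set.Ioi (0:ℝ), ∑' k, F k t)
      = ∑' k, ∫ t in Set.Ioi (0:ℝ), F k t :=
    (integral_tsum_of_summable_integral_norm hint hsumnorm).symm
  -- evaluate each integral
  have hFint : ∀ k : ℕ, (∫ t in Set.Ioi (0:ℝ), F k t)
      = u ^ (μ-1) * ((ascPochhammer ℝ k).eval γ / (Nat.factorial k : ℝ) * x ^ k) := by
    intro k
    rw [setIntegral_congr_fun measurableSet_Ioi (hFeq k), integral_const_mul,
      integral_rpow_mul_exp_neg_mul_Ioi (hs k) (by positivity), one_div, inv_inv]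
    have hΓ := hGpos k
    have hfk : (0:ℝ) < (Nat.factorial k : ℝ) := by positivity
    simp only [hC, hxdef, mul_pow]
    rw [hupowsplit k, humu]
    field_simp
  rw [step1, hinter, tsum_congr hFint, tsum_mul_left, (hasSum_binomial γ hx).tsum_eq]
end

section
/- Let f, g : [0,∞) → ℝ be functions whose Sumudu transforms F(u) = S[f](u) and G(u) = S[g](u) exist at u > 0 (with f, g absolutely integrable against e^{-t/u} on [0,∞)). Then the Sumudu transform of the convolution (f*g)(t) = ∫₀^t f(τ) g(t-τ) dτ satisfies S[f*g](u) = u · F(u) · G(u). -/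
open MeasureTheory Real Filter Topology
open scoped Convolution

/-- Sumudu transform of the convolution. -/
theorem sumudu_convolution (f g : ℝ → ℝ) (u : ℝ) (hu : 0 < u)
    (hf : IntegrableOn (fun t => Real.exp (-t / u) * f t) (Set.Ioi (0 : ℝ)))
    (hg : IntegrableOn (fun t => Real.exp (-t / u) * g t) (Set.Ioi (0 : ℝ))) :
    sumudu (fun t => ∫ τ in (0 : ℝ)..t, f τ * g (t - τ)) u
      = u * sumudu f u * sumudu g u := by
  unfold sumudu
  have hu' : u ≠ 0 := ne_of_gt hu
  set L : ℝ →L[ℝ] ℝ →L[ℝ] ℝ := ContinuousLinearMap.mul ℝ ℝ with hL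
  set F : ℝ → ℝ := (Set.Ioi (0:ℝ)).indicator (fun t => Real.exp (-t/u) * f t) with hFdef
  set G : ℝ → ℝ := (Set.Ioi (0:ℝ)).indicator (fun t => Real.exp (-t/u) * g t) with hGdef
  have hFint : Integrable F := (integrable_indicator_iff measurableSet_Ioi).2 hf
  have hGint : Integrable G := (integrable_indicator_iff measurableSet_Ioi).2 hg
  -- pointwise values of the convolution
  have hconv : ∀ t : ℝ, 0 < t →
      (F ⋆[L] G) t = Real.exp (-t/u) * ∫ τ in (0:ℝ)..t, f τ * g (t - τ) := by
    intro t ht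
    have hint : ∀ τ : ℝ, L (F τ) (G (t - τ)) =
        (Set.Ioo (0:ℝ) t).indicator (fun τ => Real.exp (-t/u) * (f τ * g (t - τ))) τ := by
      intro τ
      simp only [hL, ContinuousLinearMap.mul_apply', hFdef, hGdef]
      by_cases h1 : τ ∈ Set.Ioi (0:ℝ)
      · by_cases h2 : t - τ ∈ Set.Ioi (0:ℝ)
        · have hτt : τ ∈ Set.Ioo (0:ℝ) t := ⟨h1, by linarith [h2.out]⟩
          rw [Set.indicator_of_mem h1, Set.indicator_of_mem h2, Set.indicator_of_mem hτt]
          have : Real.exp (-τ/u) * Real.exp (-(t-τ)/u) = Real.exp (-t/u) := by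
            rw [← Real.exp_add]
            congr 1
            field_simp
            ring
          calc Real.exp (-τ/u) * f τ * (Real.exp (-(t-τ)/u) * g (t - τ))
              = (Real.exp (-τ/u) * Real.exp (-(t-τ)/u)) * (f τ * g (t - τ)) := by ring
            _ = Real.exp (-t/u) * (f τ * g (t - τ)) := by rw [this]
        · have hτt : τ ∉ Set.Ioo (0:ℝ) t := by
            simp only [Set.mem_Ioi, not_lt] at h2
            intro h; exact absurd h.2 (by linarith)
          rw [Set.indicator_of_notMem h2, Set.indicator_of_notMem hτt, mul_zero]
      · have hτt : τ ∉ Set.Ioo (0:ℝ) t := by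
          simp only [Set.mem_Ioi, not_lt] at h1
          intro h; exact absurd h.1 (by linarith)
        rw [Set.indicator_of_notMem h1, Set.indicator_of_notMem hτt, zero_mul]
    rw [convolution_def]
    simp_rw [hint]
    rw [integral_indicator measurableSet_Ioo, MeasureTheory.integral_const_mul,
      intervalIntegral.integral_of_le ht.le, integral_Ioc_eq_integral_Ioo]
  have hzero : ∀ t : ℝ, t ∉ Set.Ioi (0:ℝ) → (F ⋆[L] G) t = 0 := by
    intro t ht
    simp only [Set.mem_Ioi, not_lt] at ht
    rw [convolution_def]
    rw [integral_eq_zero_of_ae]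
    filter_upwards with τ
    show F τ * G (t - τ) = 0
    simp only [hL, ContinuousLinearMap.mul_apply', hFdef, hGdef]
    by_cases h1 : τ ∈ Set.Ioi (0:ℝ)
    · have h2 : t - τ ∉ Set.Ioi (0:ℝ) := by
        simp only [Set.mem_Ioi, not_lt]; linarith [h1.out]
      rw [Set.indicator_of_notMem h2, mul_zero]
    · rw [Set.indicator_of_notMem h1, zero_mul]
  have key : ∫ t, (F ⋆[L] G) t = (∫ t, F t) * (∫ t, G t) := by
    have := integral_convolution L hFint hGint
    simpa [hL, ContinuousLinearMap.mul_apply'] using this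
  have hFi : ∫ t, F t = ∫ t in Set.Ioi (0:ℝ), Real.exp (-t/u) * f t := by
    rw [hFdef, integral_indicator measurableSet_Ioi]
  have hGi : ∫ t, G t = ∫ t in Set.Ioi (0:ℝ), Real.exp (-t/u) * g t := by
    rw [hGdef, integral_indicator measurableSet_Ioi]
  have hleft : ∫ t in Set.Ioi (0:ℝ), Real.exp (-t/u) * (∫ τ in (0:ℝ)..t, f τ * g (t - τ))
      = ∫ t, (F ⋆[L] G) t := by
    rw [← setIntegral_eq_integral_of_forall_compl_eq_zero hzero]
    exact setIntegral_congr_fun measurableSet_Ioi fun t ht => (hconv t ht).symm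
  have expand : ∀ h : ℝ → ℝ, (∫ t in Set.Ioi (0:ℝ), (1/u) * Real.exp (-t/u) * h t)
      = (1/u) * ∫ t in Set.Ioi (0:ℝ), Real.exp (-t/u) * h t := by
    intro h
    simp_rw [mul_assoc]
    exact MeasureTheory.integral_const_mul _ _
  rw [expand, expand, expand, hleft, key, hFi, hGi]
  field_simp
end

section
/- Let μ ∈ (0,1), γ ∈ ℝ, ω ∈ ℝ, ρ > 0, and let f : [0,∞) → ℝ be differentiable with all integrals below existing, such that the Sumudu transform F(u) = S[f](u) exists at u > 0 with |ω| u^ρ < 1 and the Sumudu transform of the regularized Hilfer-Prabhakar fractional derivative ^C D_{ρ,ω,0+}^{γ,μ} f exists at u. Then S[^C D_{ρ,ω,0+}^{γ,μ} f](u) = u^{-μ} (1 - ω u^ρ)^γ (F(u) - f(0)). -/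
open MeasureTheory Real Filter Topology
open scoped ENNReal NNReal

namespace SumuduAux


noncomputable def poch (a : ℝ) (k : ℕ) : ℝ := (ascPochhammer ℝ k).eval a

lemma poch_zero (a : ℝ) : poch a 0 = 1 := by simp [poch]

lemma poch_succ (a : ℝ) (k : ℕ) : poch a (k + 1) = poch a k * (a + k) :=
  ascPochhammer_succ_eval k a

lemma poch_nonneg {a : ℝ} (ha : 0 ≤ a) (k : ℕ) : 0 ≤ poch a k := by
  induction k with
  | zero => simp [poch_zero]
  | succ k ih => rw [poch_succ]; positivity

lemma poch_mono {a b : ℝ} (ha : 0 ≤ a) (hab : a ≤ b) (k : ℕ) : poch a k ≤ poch b k := by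
  induction k with
  | zero => simp [poch_zero]
  | succ k ih =>
    rw [poch_succ, poch_succ]
    have h1 : (0:ℝ) ≤ a + k := by positivity
    have h2 := poch_nonneg ha k
    have h3 := h2.trans ih
    gcongr

lemma abs_poch_le (a : ℝ) (k : ℕ) : |poch a k| ≤ poch |a| k := by
  induction k with
  | zero => simp [poch_zero]
  | succ k ih =>
    rw [poch_succ, poch_succ, abs_mul]
    have h1 : |a + (k:ℝ)| ≤ |a| + k := by
      calc |a + (k:ℝ)| ≤ |a| + |(k:ℝ)| := abs_add_le _ _
      _ = |a| + k := by rw [abs_of_nonneg (by positivity : (0:ℝ) ≤ (k:ℝ))]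
    have h2 : (0:ℝ) ≤ |a| + k := by positivity
    have h0 := abs_nonneg (poch a k)
    have h3 := h0.trans ih
    calc |poch a k| * |a + (k:ℝ)| ≤ poch |a| k * (|a| + k) := by gcongr
    _ = _ := rfl

lemma summable_poch_geom {R x : ℝ} (hR : 0 ≤ R) (hx0 : 0 ≤ x) (hx : x < 1) :
    Summable (fun k : ℕ => poch R k / (Nat.factorial k : ℝ) * x ^ k) := by
  rcases eq_or_lt_of_le hx0 with h0 | hxpos
  · apply summable_of_ne_finset_zero (s := {0})
    intro k hk
    have hk0 : k ≠ 0 := by simpa using hk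
    rw [← h0, zero_pow hk0, mul_zero]
  · set r : ℝ := (x + 1) / 2 with hr
    have hxr : x < r := by rw [hr]; linarith
    have hr1 : r < 1 := by rw [hr]; linarith
    apply summable_of_ratio_norm_eventually_le hr1
    have htend : Tendsto (fun k : ℕ => (r - x) * k) atTop atTop :=
      Tendsto.const_mul_atTop (by linarith) tendsto_natCast_atTop_atTop
    filter_upwards [htend.eventually_ge_atTop (R * x - r + x)] with k hk
    have hpk := poch_nonneg hR k
    have hfac : (0:ℝ) < (Nat.factorial k : ℝ) := by positivity
    have hfac' : (0:ℝ) < (Nat.factorial (k+1) : ℝ) := by positivity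
    have key : (R + k) * x ≤ r * (k + 1) := by nlinarith
    have hnorm1 : ‖poch R (k+1) / (Nat.factorial (k+1) : ℝ) * x ^ (k+1)‖
        = poch R k / (Nat.factorial k : ℝ) * x ^ k * ((R + k) * x / (k+1)) := by
      rw [Real.norm_of_nonneg (mul_nonneg (div_nonneg (poch_nonneg hR (k+1)) hfac'.le)
        (pow_nonneg hx0 _))]
      rw [poch_succ, Nat.factorial_succ, Nat.cast_mul, pow_succ]
      push_cast
      have h1 : ((k:ℝ) + 1) ≠ 0 := by positivity
      have h2 : (Nat.factorial k : ℝ) ≠ 0 := ne_of_gt hfac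
      field_simp
    have hterm : (0:ℝ) ≤ poch R k / (Nat.factorial k : ℝ) * x ^ k :=
      mul_nonneg (div_nonneg hpk hfac.le) (pow_nonneg hx0 _)
    rw [hnorm1, Real.norm_of_nonneg hterm]
    have hk1 : (0:ℝ) < (k:ℝ) + 1 := by positivity
    have hle : (R + k) * x / (k+1) ≤ r := by
      rw [div_le_iff₀ hk1]
      linarith [key]
    calc poch R k / (Nat.factorial k : ℝ) * x ^ k * ((R + ↑k) * x / (↑k + 1))
        ≤ poch R k / (Nat.factorial k : ℝ) * x ^ k * r := by
          apply mul_le_mul_of_nonneg_left hle hterm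
      _ = r * (poch R k / (Nat.factorial k : ℝ) * x ^ k) := by ring


lemma desc_smeval_eq_eval (r : ℝ) (k : ℕ) :
    (descPochhammer ℤ k).smeval r = (descPochhammer ℝ k).eval r := by
  induction k with
  | zero => simp [descPochhammer_zero, Polynomial.smeval_one]
  | succ k ih =>
    rw [descPochhammer_succ_right, descPochhammer_succ_right, Polynomial.smeval_mul,
      Polynomial.eval_mul, ih, Polynomial.smeval_sub, Polynomial.smeval_X,
      Polynomial.smeval_natCast, Polynomial.eval_sub, Polynomial.eval_X, Polynomial.eval_natCast]
    norm_num

lemma poch_eq_desc (c : ℝ) (m : ℕ) :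
    poch c m = (-1) ^ m * (descPochhammer ℤ m).smeval (-c) := by
  rw [desc_smeval_eq_eval]
  have := ascPochhammer_eval_neg_eq_descPochhammer ℝ (-c) m
  rw [neg_neg] at this
  exact this

lemma desc_eq_poch (c : ℝ) (m : ℕ) :
    (descPochhammer ℤ m).smeval (-c) = (-1) ^ m * poch c m := by
  rw [poch_eq_desc c m, ← mul_assoc, ← pow_add, ← two_mul, pow_mul]
  norm_num

lemma poch_vandermonde (a b : ℝ) (k : ℕ) :
    poch (a + b) k = ∑ ij ∈ Finset.HasAntidiagonal.antidiagonal k,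
      (Nat.choose k ij.1 : ℝ) * (poch a ij.1 * poch b ij.2) := by
  have hD := Ring.descPochhammer_smeval_add (R := ℝ) (r := -a) (s := -b) k (Commute.all _ _)
  rw [poch_eq_desc, neg_add, hD, Finset.mul_sum]
  refine Finset.sum_congr rfl ?_
  intro ij hij
  have hk : ij.1 + ij.2 = k := Finset.HasAntidiagonal.mem_antidiagonal.mp hij
  rw [desc_eq_poch, desc_eq_poch, ← hk, pow_add]
  ring_nf
  rw [mul_comm ij.1 2, mul_comm ij.2 2, pow_mul, pow_mul, neg_one_sq, one_pow, one_pow,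
    mul_one, mul_one]

noncomputable def binomSum (x a : ℝ) : ℝ := ∑' k : ℕ, poch a k * x ^ k / (Nat.factorial k : ℝ)

lemma term_norm_le (a x : ℝ) (k : ℕ) :
    ‖poch a k * x ^ k / (Nat.factorial k : ℝ)‖ ≤ poch |a| k / (Nat.factorial k : ℝ) * |x| ^ k := by
  rw [norm_div, norm_mul, Real.norm_of_nonneg (by positivity : (0:ℝ) ≤ (Nat.factorial k : ℝ)),
    Real.norm_eq_abs, Real.norm_eq_abs, abs_pow]
  rw [div_mul_eq_mul_div, div_le_div_iff_of_pos_right (by positivity)]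
  exact mul_le_mul_of_nonneg_right (abs_poch_le a k) (by positivity)

lemma summable_norm_binom (a x : ℝ) (hx : |x| < 1) :
    Summable (fun k : ℕ => ‖poch a k * x ^ k / (Nat.factorial k : ℝ)‖) :=
  (summable_poch_geom (abs_nonneg a) (abs_nonneg x) hx).of_nonneg_of_le
    (fun _ => norm_nonneg _) (term_norm_le a x)

lemma summable_binom (a x : ℝ) (hx : |x| < 1) :
    Summable (fun k : ℕ => poch a k * x ^ k / (Nat.factorial k : ℝ)) :=
  (summable_norm_binom a x hx).of_norm

lemma binomSum_add (x : ℝ) (hx : |x| < 1) (a b : ℝ) :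
    binomSum x (a + b) = binomSum x a * binomSum x b := by
  rw [binomSum, binomSum, binomSum,
    tsum_mul_tsum_eq_tsum_sum_antidiagonal_of_summable_norm
      (summable_norm_binom a x hx) (summable_norm_binom b x hx)]
  refine tsum_congr fun k => ?_
  rw [poch_vandermonde, Finset.sum_mul, Finset.sum_div]
  refine Finset.sum_congr rfl ?_
  intro ij hij
  have hk : ij.1 + ij.2 = k := Finset.HasAntidiagonal.mem_antidiagonal.mp hij
  have hle : ij.1 ≤ k := by omega
  have hfact : (Nat.choose k ij.1 : ℝ) * (Nat.factorial ij.1 : ℝ) * (Nat.factorial ij.2 : ℝ)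
      = (Nat.factorial k : ℝ) := by
    rw [← Nat.cast_mul, ← Nat.cast_mul]
    norm_cast
    have := Nat.choose_mul_factorial_mul_factorial hle
    rw [← this]
    congr 2
    omega
  have h1 : (Nat.factorial ij.1 : ℝ) ≠ 0 := by positivity
  have h2 : (Nat.factorial ij.2 : ℝ) ≠ 0 := by positivity
  have h3 : (Nat.factorial k : ℝ) ≠ 0 := by positivity
  have hxk : x ^ k = x ^ ij.1 * x ^ ij.2 := by rw [← pow_add, hk]
  have h4 : (Nat.choose k ij.1 : ℝ) ≠ 0 := by
    have := Nat.choose_pos hle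
    positivity
  rw [hxk, ← hfact]
  field_simp

lemma continuous_binomSum (x : ℝ) (hx : |x| < 1) : Continuous (fun a => binomSum x a) := by
  rw [continuous_iff_continuousAt]
  intro a
  unfold ContinuousAt binomSum
  apply tendsto_tsum_of_dominated_convergence
    (bound := fun k => poch (|a| + 1) k / (Nat.factorial k : ℝ) * |x| ^ k)
  · exact summable_poch_geom (by positivity) (abs_nonneg x) hx
  · intro k
    have hc : Continuous fun b : ℝ => poch b k * x ^ k / (Nat.factorial k : ℝ) := by
      unfold poch
      fun_prop
    exact hc.tendsto a
  · have hball : ∀ᶠ b in 𝓝 a, b ∈ Metric.ball a 1 := Metric.ball_mem_nhds a one_pos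
    filter_upwards [hball] with b hb k
    have hab : |b| ≤ |a| + 1 := by
      have : |b - a| < 1 := by simpa [Real.dist_eq] using hb
      calc |b| = |a + (b - a)| := by ring_nf
      _ ≤ |a| + |b - a| := abs_add_le _ _
      _ ≤ |a| + 1 := by linarith
    calc ‖poch b k * x ^ k / (Nat.factorial k : ℝ)‖
        ≤ poch |b| k / (Nat.factorial k : ℝ) * |x| ^ k := term_norm_le b x k
      _ ≤ poch (|a| + 1) k / (Nat.factorial k : ℝ) * |x| ^ k := by
          have := poch_mono (abs_nonneg b) hab k
          gcongr
          
lemma binomSum_zero (x : ℝ) : binomSum x 0 = 1 := by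
  rw [binomSum, tsum_eq_single 0]
  · simp [poch_zero]
  · intro k hk
    unfold poch
    rw [ascPochhammer_eval_zero, if_neg hk]
    simp

lemma binomSum_one (x : ℝ) (hx : |x| < 1) : binomSum x 1 = (1 - x)⁻¹ := by
  have h : ∀ k : ℕ, poch 1 k * x ^ k / (Nat.factorial k : ℝ) = x ^ k := by
    intro k
    unfold poch
    rw [ascPochhammer_eval_one]
    have : (Nat.factorial k : ℝ) ≠ 0 := by positivity
    field_simp
  rw [binomSum]
  simp_rw [h]
  exact tsum_geometric_of_norm_lt_one (by simpa using hx)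

lemma binomSum_ne_zero (x : ℝ) (hx : |x| < 1) (a : ℝ) : binomSum x a ≠ 0 := by
  intro h
  have := binomSum_add x hx a (-a)
  rw [add_neg_cancel, binomSum_zero, h, zero_mul] at this
  exact one_ne_zero this

lemma binomSum_pos (x : ℝ) (hx : |x| < 1) (a : ℝ) : 0 < binomSum x a := by
  by_contra h
  push_neg at h
  have hne := binomSum_ne_zero x hx a
  have hlt : binomSum x a < 0 := lt_of_le_of_ne h hne
  have hcont := (continuous_binomSum x hx).continuousOn (s := Set.uIcc a 0)
  have h0 : (0:ℝ) ∈ Set.uIcc (binomSum x a) (binomSum x 0) := by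
    rw [binomSum_zero]
    exact Set.mem_uIcc.mpr (Or.inl ⟨hlt.le, zero_le_one⟩)
  obtain ⟨c, _, hc⟩ := intermediate_value_uIcc hcont h0
  exact binomSum_ne_zero x hx c hc

lemma binomSum_eq_rpow (x : ℝ) (hx : |x| < 1) (a : ℝ) : binomSum x a = (1 - x) ^ (-a) := by
  have hx1 : 0 < 1 - x := by
    have := abs_lt.mp hx
    linarith [this.2]
  set g := fun b : ℝ => binomSum x b with hg
  have hgpos : ∀ b, 0 < g b := binomSum_pos x hx
  set h := fun b : ℝ => Real.log (g b) with hh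
  have hadd : ∀ b c : ℝ, h (b + c) = h b + h c := by
    intro b c
    show Real.log (binomSum x (b+c)) = Real.log (binomSum x b) + Real.log (binomSum x c)
    rw [binomSum_add x hx b c, Real.log_mul (binomSum_ne_zero x hx b) (binomSum_ne_zero x hx c)]
  have hzero : h 0 = 0 := by
    simp only [hh, hg, binomSum_zero, Real.log_one]
  let φ : ℝ →+ ℝ := AddMonoidHom.mk' h (fun b c => hadd b c)
  have hcont : Continuous h := by
    apply Continuous.log (continuous_binomSum x hx)
    exact fun b => binomSum_ne_zero x hx b
  have hlin : ∀ b : ℝ, φ b = b * φ 1 := by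
    intro b
    have := map_real_smul φ hcont b 1
    simpa [smul_eq_mul] using this
  have hφ1 : φ 1 = -Real.log (1 - x) := by
    show Real.log (binomSum x 1) = _
    rw [binomSum_one x hx, Real.log_inv]
  have : Real.log (g a) = a * (-Real.log (1 - x)) := by
    have := hlin a
    rw [hφ1] at this
    exact this
  have hga : g a = Real.exp (Real.log (1 - x) * (-a)) := by
    rw [← Real.exp_log (hgpos a), this]
    ring_nf
  rw [hg] at hga
  simpa [Real.rpow_def_of_pos hx1] using hga

/-- Binomial series. -/
theorem binom_tsum (a x : ℝ) (hx : |x| < 1) :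
    ∑' k : ℕ, (ascPochhammer ℝ k).eval a * x ^ k / (Nat.factorial k : ℝ) = (1 - x) ^ (-a) :=
  binomSum_eq_rpow x hx a


lemma ae_summable_norm {G : ℕ → ℝ → ℝ}
    (hmeas : ∀ k, AEStronglyMeasurable (G k) volume)
    (hint : ∀ k, Integrable (G k) volume)
    (hsum : Summable fun k => ∫ s, ‖G k s‖) :
    ∀ᵐ s : ℝ, Summable fun k => ‖G k s‖ := by
  have hlint : ∀ k, ∫⁻ s, (‖G k s‖₊ : ℝ≥0∞) = ENNReal.ofReal (∫ s, ‖G k s‖) := fun k =>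
    (ofReal_integral_norm_eq_lintegral_enorm (hint k)).symm
  have htot : (∑' k, ∫⁻ s, (‖G k s‖₊ : ℝ≥0∞)) ≠ ∞ := by
    simp_rw [hlint]
    rw [← ENNReal.ofReal_tsum_of_nonneg (fun k => integral_nonneg fun s => norm_nonneg _) hsum]
    exact ENNReal.ofReal_ne_top
  have hTmeas : AEMeasurable (fun s => ∑' k, (‖G k s‖₊ : ℝ≥0∞)) volume :=
    AEMeasurable.ennreal_tsum fun k => ((hmeas k).enorm : AEMeasurable (fun s => (‖G k s‖₊ : ℝ≥0∞)) volume)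
  have hTlt : (∫⁻ s, ∑' k, (‖G k s‖₊ : ℝ≥0∞)) ≠ ∞ := by
    rw [lintegral_tsum (f := fun k s => (‖G k s‖₊ : ℝ≥0∞)) fun k => (hmeas k).enorm]
    exact htot
  filter_upwards [ae_lt_top' hTmeas hTlt] with s hs
  have h1 := ENNReal.tsum_coe_ne_top_iff_summable_coe.mp hs.ne
  simpa [coe_nnnorm] using h1

lemma aestronglyMeasurable_tsum {G : ℕ → ℝ → ℝ}
    (hmeas : ∀ k, AEStronglyMeasurable (G k) volume)
    (hint : ∀ k, Integrable (G k) volume)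
    (hsum : Summable fun k => ∫ s, ‖G k s‖) :
    AEStronglyMeasurable (fun s => ∑' k, G k s) volume := by
  apply aestronglyMeasurable_of_tendsto_ae (u := atTop)
    (f := fun n s => ∑ k ∈ Finset.range n, G k s)
  · exact fun n => Finset.aestronglyMeasurable_fun_sum _ fun k _ => hmeas k
  · filter_upwards [ae_summable_norm hmeas hint hsum] with s hs
    exact hs.of_norm.hasSum.tendsto_sum_nat

lemma integrable_tsum_of {G : ℕ → ℝ → ℝ}
    (hmeas : ∀ k, AEStronglyMeasurable (G k) volume)
    (hint : ∀ k, Integrable (G k) volume)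
    (hsum : Summable fun k => ∫ s, ‖G k s‖) :
    Integrable (fun s => ∑' k, G k s) volume := by
  set T : ℝ → ℝ≥0∞ := fun s => ∑' k, (‖G k s‖₊ : ℝ≥0∞) with hT
  have hTmeas : AEMeasurable T volume := AEMeasurable.ennreal_tsum fun k => ((hmeas k).enorm : AEMeasurable (fun s => (‖G k s‖₊ : ℝ≥0∞)) volume)
  have hTlt : (∫⁻ s, T s) ≠ ∞ := by
    rw [hT]
    simp only
    rw [lintegral_tsum (f := fun k s => (‖G k s‖₊ : ℝ≥0∞)) fun k => (hmeas k).enorm]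
    have hlint : ∀ k, ∫⁻ s, (‖G k s‖₊ : ℝ≥0∞) = ENNReal.ofReal (∫ s, ‖G k s‖) := fun k =>
      (ofReal_integral_norm_eq_lintegral_enorm (hint k)).symm
    simp_rw [hlint]
    rw [← ENNReal.ofReal_tsum_of_nonneg (fun k => integral_nonneg fun s => norm_nonneg _) hsum]
    exact ENNReal.ofReal_ne_top
  have hB : Integrable (fun s => (T s).toReal) volume := by
    refine ⟨hTmeas.ennreal_toReal.aestronglyMeasurable, ?_⟩
    show (∫⁻ s, (‖(T s).toReal‖₊ : ℝ≥0∞)) < ∞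
    calc (∫⁻ s, (‖(T s).toReal‖₊ : ℝ≥0∞)) ≤ ∫⁻ s, T s := by
          apply lintegral_mono
          intro s
          simp only
          rw [Real.nnnorm_of_nonneg ENNReal.toReal_nonneg]
          exact ENNReal.coe_toNNReal_le_self
      _ < ∞ := hTlt.lt_top
  apply hB.mono' (aestronglyMeasurable_tsum hmeas hint hsum)
  filter_upwards [ae_summable_norm hmeas hint hsum] with s hs
  have h1 : ‖∑' k, G k s‖ ≤ ∑' k, ‖G k s‖ := norm_tsum_le_tsum_norm hs
  have h2 : ∑' k, ‖G k s‖ = (T s).toReal := by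
    have hnn : Summable fun k => ‖G k s‖₊ := by
      rwa [← NNReal.summable_coe]
    rw [hT]
    simp only
    rw [← ENNReal.coe_tsum hnn, ENNReal.coe_toReal, NNReal.coe_tsum]
    simp [coe_nnnorm]
  calc ‖∑' k, G k s‖ ≤ ∑' k, ‖G k s‖ := h1
    _ = _ := h2


section Laplace

lemma exp_rpow_integrableOn {u : ℝ} (hu : 0 < u) {a : ℝ} (ha : 0 < a) :
    IntegrableOn (fun s => Real.exp (-s / u) * s ^ (a - 1)) (Set.Ioi (0 : ℝ)) := by
  have h := integrableOn_rpow_mul_exp_neg_mul_rpow (p := 1) (s := a - 1) (b := 1 / u)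
    (by linarith) one_pos (by positivity)
  apply h.congr_fun ?_ measurableSet_Ioi
  intro x hx
  simp only
  rw [Real.rpow_one, mul_comm]
  congr 1
  rw [neg_div, one_div, neg_mul, inv_mul_eq_div]

lemma exp_rpow_integral {u : ℝ} (hu : 0 < u) {a : ℝ} (ha : 0 < a) :
    ∫ s in Set.Ioi (0 : ℝ), Real.exp (-s / u) * s ^ (a - 1) = u ^ a * Real.Gamma a := by
  have h := Real.integral_rpow_mul_exp_neg_mul_Ioi ha (by positivity : (0:ℝ) < 1 / u)
  rw [one_div_one_div] at h
  rw [← h]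
  apply setIntegral_congr_fun measurableSet_Ioi
  intro x hx
  simp only
  rw [mul_comm]
  congr 1
  rw [neg_div, one_div, inv_mul_eq_div]

variable {ρ ν ω gq u : ℝ}

/-- coefficients of the expanded kernel series -/
noncomputable def lapCoeff (ρ ν gq ω : ℝ) (k : ℕ) : ℝ :=
  (ascPochhammer ℝ k).eval gq / Real.Gamma (ρ * k + ν) * ω ^ k / (Nat.factorial k : ℝ)

noncomputable def lapTerm (ρ ν gq ω u : ℝ) (k : ℕ) : ℝ → ℝ :=
  Set.indicator (Set.Ioi (0:ℝ))
    (fun s => lapCoeff ρ ν gq ω k * (Real.exp (-s / u) * s ^ (ρ * k + ν - 1)))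

lemma lapTerm_meas (k : ℕ) : AEStronglyMeasurable (lapTerm ρ ν gq ω u k) volume := by
  apply AEStronglyMeasurable.indicator ?_ measurableSet_Ioi
  apply Measurable.aestronglyMeasurable
  fun_prop

lemma lapTerm_int (hρ : 0 < ρ) (hν : 0 < ν) (hu : 0 < u) (k : ℕ) :
    Integrable (lapTerm ρ ν gq ω u k) volume := by
  rw [lapTerm, integrable_indicator_iff measurableSet_Ioi]
  have ha : (0:ℝ) < ρ * k + ν := by positivity
  exact ((exp_rpow_integrableOn hu ha).const_mul _)

lemma lapTerm_norm_integral (hρ : 0 < ρ) (hν : 0 < ν) (hu : 0 < u) (k : ℕ) :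
    ∫ s, ‖lapTerm ρ ν gq ω u k s‖
      = |lapCoeff ρ ν gq ω k| * (u ^ (ρ * k + ν) * Real.Gamma (ρ * k + ν)) := by
  have ha : (0:ℝ) < ρ * k + ν := by positivity
  rw [lapTerm]
  have : ∀ s : ℝ, ‖Set.indicator (Set.Ioi (0:ℝ))
      (fun s => lapCoeff ρ ν gq ω k * (Real.exp (-s / u) * s ^ (ρ * k + ν - 1))) s‖
      = Set.indicator (Set.Ioi (0:ℝ))
      (fun s => |lapCoeff ρ ν gq ω k| * (Real.exp (-s / u) * s ^ (ρ * k + ν - 1))) s := by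
    intro s
    by_cases hs : s ∈ Set.Ioi (0:ℝ)
    · rw [Set.indicator_of_mem hs, Set.indicator_of_mem hs, Real.norm_eq_abs, abs_mul]
      congr 1
      rw [abs_of_nonneg]
      have : (0:ℝ) < s := hs
      positivity
    · rw [Set.indicator_of_notMem hs, Set.indicator_of_notMem hs, norm_zero]
  simp_rw [this]
  rw [integral_indicator measurableSet_Ioi, integral_const_mul, exp_rpow_integral hu ha]

lemma lapTerm_integral (hρ : 0 < ρ) (hν : 0 < ν) (hu : 0 < u) (k : ℕ) :
    ∫ s, lapTerm ρ ν gq ω u k s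
      = lapCoeff ρ ν gq ω k * (u ^ (ρ * k + ν) * Real.Gamma (ρ * k + ν)) := by
  have ha : (0:ℝ) < ρ * k + ν := by positivity
  rw [lapTerm, integral_indicator measurableSet_Ioi, integral_const_mul,
    exp_rpow_integral hu ha]

lemma upow_split (hρ : 0 < ρ) (hu : 0 < u) (k : ℕ) (ν : ℝ) :
    u ^ (ρ * k + ν) = (u ^ ρ) ^ k * u ^ ν := by
  rw [Real.rpow_add hu, ← Real.rpow_natCast (u ^ ρ) k, ← Real.rpow_mul hu.le]

lemma lapTerm_summable_norm (hρ : 0 < ρ) (hν : 0 < ν) (hu : 0 < u)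
    (hω : |ω| * u ^ ρ < 1) :
    Summable (fun k => ∫ s, ‖lapTerm ρ ν gq ω u k s‖) := by
  have hupos : (0:ℝ) < u ^ ρ := Real.rpow_pos_of_pos hu ρ
  have hx : |ω| * u ^ ρ < 1 := hω
  have hx0 : 0 ≤ |ω| * u ^ ρ := by positivity
  have hb : Summable (fun k => (poch |gq| k / (Nat.factorial k : ℝ) * (|ω| * u ^ ρ) ^ k) * u ^ ν) :=
    (summable_poch_geom (abs_nonneg gq) hx0 hx).mul_right _
  refine hb.of_nonneg_of_le (fun k => integral_nonneg fun s => norm_nonneg _) (fun k => ?_)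
  · rw [lapTerm_norm_integral hρ hν hu k]
    have hΓ : (0:ℝ) < Real.Gamma (ρ * k + ν) := Real.Gamma_pos_of_pos (by positivity)
    rw [lapCoeff]
    rw [abs_div, abs_mul, abs_div, abs_of_nonneg hΓ.le,
      abs_of_nonneg (by positivity : (0:ℝ) ≤ (Nat.factorial k : ℝ)), abs_pow]
    rw [upow_split hρ hu k ν]
    have hcancel : |(ascPochhammer ℝ k).eval gq| / Real.Gamma (ρ * k + ν) * |ω| ^ k /
          (Nat.factorial k : ℝ) * ((u ^ ρ) ^ k * u ^ ν * Real.Gamma (ρ * k + ν))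
        = (|(ascPochhammer ℝ k).eval gq| / (Nat.factorial k : ℝ) * (|ω| * u ^ ρ) ^ k) * u ^ ν := by
      field_simp
      ring
    rw [hcancel]
    have h1 : |(ascPochhammer ℝ k).eval gq| ≤ poch |gq| k := abs_poch_le gq k
    have h2 : (0:ℝ) ≤ u ^ ν := by positivity
    gcongr

lemma lapTerm_tsum_eq :
    (fun s => ∑' k, lapTerm ρ ν gq ω u k s)
      = Set.indicator (Set.Ioi (0:ℝ))
          (fun s => Real.exp (-s / u) * prabhakarKernel ρ ν ω gq s) := by
  funext s
  by_cases hs : s ∈ Set.Ioi (0:ℝ)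
  · rw [Set.indicator_of_mem hs]
    have hs0 : (0:ℝ) < s := hs
    rw [prabhakarKernel, mittagLeffler, ← mul_assoc, ← tsum_mul_left]
    apply tsum_congr
    intro k
    rw [lapTerm, Set.indicator_of_mem hs, lapCoeff]
    have h1 : (ω * s ^ ρ) ^ k = ω ^ k * s ^ (ρ * (k:ℝ)) := by
      rw [mul_pow]
      congr 1
      rw [← Real.rpow_natCast (s ^ ρ) k, ← Real.rpow_mul hs0.le]
    have h2 : s ^ (ρ * (k:ℝ) + ν - 1) = s ^ (ρ * (k:ℝ)) * s ^ (ν - 1) := by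
      rw [← Real.rpow_add hs0]
      ring_nf
    rw [h1, h2]
    ring
  · rw [Set.indicator_of_notMem hs]
    have : ∀ k : ℕ, lapTerm ρ ν gq ω u k s = 0 := by
      intro k
      rw [lapTerm, Set.indicator_of_notMem hs]
    simp_rw [this]
    exact tsum_zero

lemma laplace_kernel_integrableOn (hρ : 0 < ρ) (hν : 0 < ν) (hu : 0 < u)
    (hω : |ω| * u ^ ρ < 1) :
    IntegrableOn (fun s => Real.exp (-s / u) * prabhakarKernel ρ ν ω gq s) (Set.Ioi (0:ℝ)) := by
  have h := integrable_tsum_of (G := lapTerm ρ ν gq ω u) (fun k => lapTerm_meas k)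
    (fun k => lapTerm_int hρ hν hu k) (lapTerm_summable_norm hρ hν hu hω)
  rw [lapTerm_tsum_eq] at h
  rwa [integrable_indicator_iff measurableSet_Ioi] at h

lemma laplace_kernel_integral (hρ : 0 < ρ) (hν : 0 < ν) (hu : 0 < u)
    (hω : |ω| * u ^ ρ < 1) :
    ∫ s in Set.Ioi (0:ℝ), Real.exp (-s / u) * prabhakarKernel ρ ν ω gq s
      = u ^ ν * (1 - ω * u ^ ρ) ^ (-gq) := by
  have heq := integral_tsum_of_summable_integral_norm (F := lapTerm ρ ν gq ω u) (μ := volume)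
    (fun k => lapTerm_int hρ hν hu k) (lapTerm_summable_norm hρ hν hu hω)
  rw [lapTerm_tsum_eq, integral_indicator measurableSet_Ioi] at heq
  rw [← heq]
  have hterm : ∀ k : ℕ, ∫ s, lapTerm ρ ν gq ω u k s
      = u ^ ν * ((ascPochhammer ℝ k).eval gq * (ω * u ^ ρ) ^ k / (Nat.factorial k : ℝ)) := by
    intro k
    rw [lapTerm_integral hρ hν hu k, lapCoeff, upow_split hρ hu k ν]
    have hΓ : Real.Gamma (ρ * k + ν) ≠ 0 := (Real.Gamma_pos_of_pos (by positivity)).ne'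
    have hf : (Nat.factorial k : ℝ) ≠ 0 := by positivity
    rw [mul_pow]
    field_simp
  simp_rw [hterm]
  rw [tsum_mul_left]
  have hx : |ω * u ^ ρ| < 1 := by
    rwa [abs_mul, abs_of_nonneg (Real.rpow_pos_of_pos hu ρ).le]
  rw [binom_tsum gq _ hx]

end Laplace


section Parts

lemma limit_zero_of_integrableOn {g : ℝ → ℝ} {L : ℝ}
    (hg : IntegrableOn g (Set.Ioi (0:ℝ)) volume)
    (hL : Tendsto g atTop (𝓝 L)) : L = 0 := by
  by_contra hL0
  have habs : 0 < |L| / 2 := by positivity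
  have hev : ∀ᶠ x in atTop, |L| / 2 ≤ ‖g x‖ := by
    have h1 : Tendsto (fun x => ‖g x‖) atTop (𝓝 ‖L‖) := hL.norm
    exact h1.eventually_const_le (by rw [Real.norm_eq_abs]; linarith)
  rw [eventually_atTop] at hev
  obtain ⟨M, hM⟩ := hev
  set M' := max M 1 with hM'
  have hsub : Set.Ioi M' ⊆ Set.Ioi (0:ℝ) := fun x hx => by
    have : (1:ℝ) ≤ M' := le_max_right _ _
    exact Set.mem_Ioi.mpr (by have := Set.mem_Ioi.mp hx; linarith)
  have hgM : IntegrableOn g (Set.Ioi M') volume := hg.mono_set hsub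
  have hconst : Integrable (fun _ : ℝ => |L| / 2) (volume.restrict (Set.Ioi M')) := by
    apply Integrable.mono hgM aestronglyMeasurable_const
    rw [ae_restrict_iff' measurableSet_Ioi]
    filter_upwards with x hx
    rw [Real.norm_eq_abs, abs_of_nonneg habs.le]
    exact hM x (le_trans (le_max_left _ _) (Set.mem_Ioi.mp hx).le)
  rw [integrable_const_iff] at hconst
  rcases hconst with h | h
  · exact habs.ne' h
  · have h := h.measure_univ_lt_top
    rw [Measure.restrict_apply_univ, Real.volume_Ioi] at h
    exact (lt_irrefl _ h).elim

lemma integral_exp_deriv {u : ℝ} (hu : 0 < u) (f : ℝ → ℝ) (hdiff : Differentiable ℝ f)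
    (hF : IntegrableOn (fun t => Real.exp (-t / u) * f t) (Set.Ioi (0:ℝ)))
    (hf' : IntegrableOn (fun t => Real.exp (-t / u) * deriv f t) (Set.Ioi (0:ℝ))) :
    ∫ y in Set.Ioi (0:ℝ), Real.exp (-y / u) * deriv f y = sumudu f u - f 0 := by
  set g : ℝ → ℝ := fun y => Real.exp (-y / u) * f y with hg
  set g' : ℝ → ℝ := fun y =>
    Real.exp (-y / u) * deriv f y - (1 / u) * (Real.exp (-y / u) * f y) with hg'
  have hgderiv : ∀ y : ℝ, HasDerivAt g (g' y) y := by
    intro y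
    have h1 : HasDerivAt (fun y : ℝ => -y / u) (-(1 / u)) y := by
      have h0 := (hasDerivAt_id y).neg.div_const u
      exact h0.congr_deriv (by ring)
    have h2 : HasDerivAt (fun y : ℝ => Real.exp (-y / u)) (Real.exp (-y / u) * (-(1 / u))) y :=
      h1.exp
    have h3 : HasDerivAt f (deriv f y) y := (hdiff y).hasDerivAt
    have := h2.mul h3
    rw [hg']
    exact this.congr_deriv (by beta_reduce; ring)
  have hg'int : IntegrableOn g' (Set.Ioi (0:ℝ)) volume := hf'.sub (hF.const_mul _)
  have hlim : Tendsto g atTop (𝓝 (limUnder atTop g)) :=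
    tendsto_limUnder_of_hasDerivAt_of_integrableOn_Ioi (a := 0)
      (fun x _ => hgderiv x) hg'int
  have hL0 : limUnder atTop g = 0 := limit_zero_of_integrableOn hF hlim
  rw [hL0] at hlim
  have hFTC : ∫ y in Set.Ioi (0:ℝ), g' y = 0 - g 0 :=
    integral_Ioi_of_hasDerivAt_of_tendsto' (fun x _ => hgderiv x) hg'int hlim
  have hsplit : ∫ y in Set.Ioi (0:ℝ), g' y
      = (∫ y in Set.Ioi (0:ℝ), Real.exp (-y / u) * deriv f y)
        - ∫ y in Set.Ioi (0:ℝ), (1 / u) * (Real.exp (-y / u) * f y) := by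
    rw [hg']
    exact integral_sub hf' (hF.const_mul _)
  have hsum : ∫ y in Set.Ioi (0:ℝ), (1 / u) * (Real.exp (-y / u) * f y) = sumudu f u := by
    rw [sumudu]
    apply setIntegral_congr_fun measurableSet_Ioi
    intro x _
    simp only
    ring
  have hg0 : g 0 = f 0 := by
    rw [hg]
    simp
  rw [hsplit, hsum] at hFTC
  rw [hg0] at hFTC
  linarith

end Parts


section Fubini

noncomputable def shear : ℝ × ℝ ≃ᵐ ℝ × ℝ where
  toFun z := (z.1 - z.2, z.2)
  invFun z := (z.1 + z.2, z.2)
  left_inv z := by simp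
  right_inv z := by simp
  measurable_toFun := (measurable_fst.sub measurable_snd).prodMk measurable_snd
  measurable_invFun := (measurable_fst.add measurable_snd).prodMk measurable_snd

lemma conv_integrable (Φ Ψ : ℝ → ℝ) (hΦ : Integrable Φ volume) (hΨ : Integrable Ψ volume) :
    Integrable (fun z : ℝ × ℝ => Φ (z.1 - z.2) * Ψ z.2)
      ((volume : Measure ℝ).prod volume) := by
  have hmp : MeasurePreserving (fun z : ℝ × ℝ => (z.1 - z.2, z.2))
      ((volume : Measure ℝ).prod volume) ((volume : Measure ℝ).prod volume) :=
    measurePreserving_sub_prod volume volume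
  have hemb : MeasurableEmbedding (fun z : ℝ × ℝ => (z.1 - z.2, z.2)) :=
    shear.measurableEmbedding
  have hpm : Integrable (fun q : ℝ × ℝ => Φ q.1 * Ψ q.2)
      ((volume : Measure ℝ).prod volume) := hΦ.mul_prod hΨ
  exact (hmp.integrable_comp_emb hemb).mpr hpm

lemma conv_eq (Φ Ψ : ℝ → ℝ) (hΦ : Integrable Φ volume) (hΨ : Integrable Ψ volume) :
    ∫ t : ℝ, ∫ y : ℝ, Φ (t - y) * Ψ y = (∫ s : ℝ, Φ s) * ∫ y : ℝ, Ψ y := by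
  have hmp : MeasurePreserving (fun z : ℝ × ℝ => (z.1 - z.2, z.2))
      ((volume : Measure ℝ).prod volume) ((volume : Measure ℝ).prod volume) :=
    measurePreserving_sub_prod volume volume
  have hemb : MeasurableEmbedding (fun z : ℝ × ℝ => (z.1 - z.2, z.2)) :=
    shear.measurableEmbedding
  have hcomp := conv_integrable Φ Ψ hΦ hΨ
  have h1 : ∫ t : ℝ, ∫ y : ℝ, Φ (t - y) * Ψ y
      = ∫ z : ℝ × ℝ, Φ (z.1 - z.2) * Ψ z.2 ∂((volume : Measure ℝ).prod volume) :=
    (MeasureTheory.integral_prod _ hcomp).symm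
  have h2 : ∫ z : ℝ × ℝ, Φ (z.1 - z.2) * Ψ z.2 ∂((volume : Measure ℝ).prod volume)
      = ∫ q : ℝ × ℝ, Φ q.1 * Ψ q.2 ∂((volume : Measure ℝ).prod volume) :=
    hmp.integral_comp hemb (fun q : ℝ × ℝ => Φ q.1 * Ψ q.2)
  rw [h1, h2, MeasureTheory.integral_prod_mul]

end Fubini

end SumuduAux

/-- Sumudu transform of the regularized Hilfer–Prabhakar derivative. -/
theorem sumudu_regHilferPrabhakar (ρ ω γ μ u : ℝ) (f : ℝ → ℝ)
    (hμ : μ ∈ Set.Ioo (0 : ℝ) 1) (hρ : 0 < ρ) (hu : 0 < u) (hω : |ω| * u ^ ρ < 1)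
    (hdiff : Differentiable ℝ f)
    (hF : IntegrableOn (fun t => Real.exp (-t / u) * f t) (Set.Ioi (0 : ℝ)))
    (hf' : IntegrableOn (fun t => Real.exp (-t / u) * deriv f t) (Set.Ioi (0 : ℝ)))
    (hD : IntegrableOn (fun t => Real.exp (-t / u) * regHilferPrabhakar ρ ω γ μ f t)
      (Set.Ioi (0 : ℝ))) :
    sumudu (regHilferPrabhakar ρ ω γ μ f) u
      = u ^ (-μ) * (1 - ω * u ^ ρ) ^ γ * (sumudu f u - f 0) := by
  obtain ⟨hμ0, hμ1⟩ := hμ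
  have hν : 0 < 1 - μ := by linarith
  set K : ℝ → ℝ := prabhakarKernel ρ (1 - μ) ω (-γ) with hK
  set Φ : ℝ → ℝ := Set.indicator (Set.Ioi 0) (fun s => Real.exp (-s / u) * K s) with hΦ
  set Ψ : ℝ → ℝ := Set.indicator (Set.Ioi 0) (fun y => Real.exp (-y / u) * deriv f y) with hΨ
  have hΦint : Integrable Φ volume := by
    rw [hΦ, integrable_indicator_iff measurableSet_Ioi]
    exact SumuduAux.laplace_kernel_integrableOn hρ hν hu hω
  have hΨint : Integrable Ψ volume := by
    rw [hΨ, integrable_indicator_iff measurableSet_Ioi]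
    exact hf'
  have hΦval : ∫ s : ℝ, Φ s = u ^ (1 - μ) * (1 - ω * u ^ ρ) ^ γ := by
    rw [hΦ, integral_indicator measurableSet_Ioi, hK,
      SumuduAux.laplace_kernel_integral hρ hν hu hω, neg_neg]
  have hΨval : ∫ y : ℝ, Ψ y = sumudu f u - f 0 := by
    rw [hΨ, integral_indicator measurableSet_Ioi]
    exact SumuduAux.integral_exp_deriv hu f hdiff hF hf'
  have hKzero : K 0 = 0 := by
    rw [hK, prabhakarKernel, Real.zero_rpow, zero_mul]
    intro h
    have : μ = 0 := by linarith [sub_eq_zero.mp (by linarith [h] : (1 - μ) - 1 = 0)]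
    linarith
  have hinner : ∀ t : ℝ, (∫ y : ℝ, Φ (t - y) * Ψ y)
      = Set.indicator (Set.Ioi 0)
          (fun t => Real.exp (-t / u) * regHilferPrabhakar ρ ω γ μ f t) t := by
    intro t
    by_cases ht : t ∈ Set.Ioi (0:ℝ)
    · have ht0 : (0:ℝ) < t := ht
      rw [Set.indicator_of_mem ht]
      have hfun : (fun y => Φ (t - y) * Ψ y)
          = Set.indicator (Set.Ioc 0 t)
              (fun y => Real.exp (-t / u) * (K (t - y) * deriv f y)) := by
        funext y
        by_cases hy : y ∈ Set.Ioc (0:ℝ) t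
        · obtain ⟨hy0, hyt⟩ := hy
          rw [Set.indicator_of_mem (Set.mem_Ioc.mpr ⟨hy0, hyt⟩)]
          rcases lt_or_eq_of_le hyt with hlt | heq
          · have h1 : t - y ∈ Set.Ioi (0:ℝ) := Set.mem_Ioi.mpr (by linarith)
            rw [hΦ, hΨ, Set.indicator_of_mem h1, Set.indicator_of_mem (Set.mem_Ioi.mpr hy0)]
            have hexp : Real.exp (-(t - y) / u) * Real.exp (-y / u) = Real.exp (-t / u) := by
              rw [← Real.exp_add]
              congr 1
              field_simp
              ring
            calc Real.exp (-(t - y) / u) * K (t - y) * (Real.exp (-y / u) * deriv f y)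
                = Real.exp (-(t - y) / u) * Real.exp (-y / u) * (K (t - y) * deriv f y) := by
                  ring
              _ = Real.exp (-t / u) * (K (t - y) * deriv f y) := by rw [hexp]
          · have hty : t - y = 0 := by rw [heq]; ring
            have h1 : t - y ∉ Set.Ioi (0:ℝ) := by rw [hty]; simp
            rw [hΦ, Set.indicator_of_notMem h1, zero_mul, hty, hKzero, zero_mul, mul_zero]
        · rw [Set.indicator_of_notMem hy]
          rw [Set.mem_Ioc] at hy
          push_neg at hy
          by_cases hy0 : 0 < y
          · have hyt : t < y := hy hy0
            have h1 : t - y ∉ Set.Ioi (0:ℝ) := by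
              simp only [Set.mem_Ioi, not_lt]
              linarith
            rw [hΦ, Set.indicator_of_notMem h1, zero_mul]
          · have h2 : y ∉ Set.Ioi (0:ℝ) := by simpa using hy0
            rw [hΨ, Set.indicator_of_notMem h2, mul_zero]
      rw [hfun, integral_indicator measurableSet_Ioc, integral_const_mul]
      congr 1
      rw [regHilferPrabhakar, prabhakarIntegral, if_neg, intervalIntegral.integral_of_le ht0.le]
      rintro ⟨h1, _⟩
      linarith
    · rw [Set.indicator_of_notMem ht]
      rw [Set.mem_Ioi] at ht
      push_neg at ht
      have hzero : (fun y => Φ (t - y) * Ψ y) = fun _ => 0 := by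
        funext y
        by_cases hy0 : 0 < y
        · have h1 : t - y ∉ Set.Ioi (0:ℝ) := by
            simp only [Set.mem_Ioi, not_lt]
            linarith
          rw [hΦ, Set.indicator_of_notMem h1, zero_mul]
        · have h2 : y ∉ Set.Ioi (0:ℝ) := by simpa using hy0
          rw [hΨ, Set.indicator_of_notMem h2, mul_zero]
      rw [hzero, integral_zero]
  have hdouble := SumuduAux.conv_eq Φ Ψ hΦint hΨint
  simp_rw [hinner] at hdouble
  rw [integral_indicator measurableSet_Ioi] at hdouble
  rw [sumudu]
  have hmul : ∀ t : ℝ, 1 / u * Real.exp (-t / u) * regHilferPrabhakar ρ ω γ μ f t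
      = 1 / u * (Real.exp (-t / u) * regHilferPrabhakar ρ ω γ μ f t) := fun t => by ring
  simp_rw [hmul]
  rw [integral_const_mul, hdouble, hΦval, hΨval]
  have hu1 : u ^ ((1:ℝ) - μ) = u * u ^ (-μ) := by
    have : (1:ℝ) - μ = 1 + (-μ) := by ring
    rw [this, Real.rpow_add hu, Real.rpow_one]
  rw [hu1]
  have hune : u ≠ 0 := hu.ne'
  field_simp
end
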